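/- Let 1 < p < 3 and c > 0, and let u₀ ∈ L²(ℝ) with u₀ ≠ 0. Then there exists R₀ > 0 such that ‖ x ↦ ⟨x/R₀⟩^{-1} u₀(x) ‖_{L²(ℝ)} ≥ (c / R₀)^{1/(p-1)} · ‖ x ↦ ⟨x/R₀⟩^{-1} ‖_{L²(ℝ)}. -/

import Mathlib

open Real MeasureTheory Filter

open scoped ENNReal Topology

/-! For `R ≥ 1` the weight `⟨x/R⟩⁻¹` dominates `⟨x⟩⁻¹`, so `‖⟨·/R⟩⁻¹ u₀‖_{L²}` stays above the
positive constant `‖⟨·⟩⁻¹ u₀‖_{L²}`. On the other hand `‖⟨·/R⟩⁻¹‖_{L²} = (πR)^{1/2}`, so the right-hand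
side is a multiple of `R^{1/2 - 1/(p-1)}`, which tends to `0` because `p < 3`. -/

lemma inv_sqrt_one_add_div_sq_le {R S : ℝ} (hR : 0 < R) (hRS : R ≤ S) (x : ℝ) :
    ((1 + (x / R) ^ 2) ^ ((1 : ℝ) / 2))⁻¹ ≤ ((1 + (x / S) ^ 2) ^ ((1 : ℝ) / 2))⁻¹ := by
  have hsq : (x / S) ^ 2 ≤ (x / R) ^ 2 := by
    rw [div_pow, div_pow]
    gcongr
  gcongr

lemma eLpNorm_ofReal_mul_mono {α : Type*} [MeasurableSpace α] {μ : Measure α}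
    {p : ℝ≥0∞} {f g : α → ℝ} (hf : ∀ x, 0 ≤ f x) (hfg : ∀ x, f x ≤ g x) (u : α → ℂ) :
    eLpNorm (fun x => (f x : ℂ) * u x) p μ ≤ eLpNorm (fun x => (g x : ℂ) * u x) p μ := by
  refine eLpNorm_mono fun x => ?_
  simp only [norm_mul, Complex.norm_real, Real.norm_of_nonneg (hf x),
    Real.norm_of_nonneg ((hf x).trans (hfg x))]
  gcongr
  exact hfg x

lemma eLpNorm_ofReal_mul_ne_zero {α : Type*} [MeasurableSpace α] {μ : Measure α}
    {p : ℝ≥0∞} (hp : p ≠ 0) {f : α → ℝ} {u : α → ℂ} (hf : Measurable f) (hf0 : ∀ x, f x ≠ 0)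
    (hu : AEStronglyMeasurable u μ) (hu0 : eLpNorm u p μ ≠ 0) :
    eLpNorm (fun x => (f x : ℂ) * u x) p μ ≠ 0 := by
  have hfu : AEStronglyMeasurable (fun x => (f x : ℂ) * u x) μ :=
    (Complex.measurable_ofReal.comp hf).aestronglyMeasurable.mul hu
  rw [Ne, eLpNorm_eq_zero_iff hfu hp]
  rw [Ne, eLpNorm_eq_zero_iff hu hp] at hu0
  refine fun h => hu0 ?_
  filter_upwards [h] with x hx
  simpa [hf0 x] using hx

lemma eLpNorm_inv_sqrt_one_add_div_sq {R : ℝ} (hR : 0 < R) :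
    eLpNorm (fun x : ℝ => ((1 + (x / R) ^ 2) ^ ((1 : ℝ) / 2))⁻¹) 2 volume
      = ENNReal.ofReal ((R * π) ^ ((1 : ℝ) / 2)) := by
  have hsq (x : ℝ) : ‖((1 + (x / R) ^ 2) ^ ((1 : ℝ) / 2))⁻¹‖ₑ ^ (2 : ℝ)
      = ENNReal.ofReal (1 + (x / R) ^ 2)⁻¹ := by
    have hpos : 0 < 1 + (x / R) ^ 2 := by positivity
    rw [Real.enorm_eq_ofReal (by positivity), ENNReal.ofReal_rpow_of_nonneg (by positivity)
      (by norm_num), Real.inv_rpow (by positivity), ← Real.rpow_mul hpos.le]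
    norm_num
  have hint : ∫ x : ℝ, (1 + (x / R) ^ 2)⁻¹ = R * π := by
    rw [Measure.integral_comp_div (fun y : ℝ => (1 + y ^ 2)⁻¹) R,
      integral_univ_inv_one_add_sq, abs_of_pos hR, smul_eq_mul]
  rw [eLpNorm_eq_lintegral_rpow_enorm_toReal (by norm_num) (by norm_num), ENNReal.toReal_ofNat,
    lintegral_congr hsq, ← ofReal_integral_eq_lintegral_ofReal
      (integrable_inv_one_add_sq.comp_div hR.ne') (.of_forall fun x => by positivity),
    hint, ENNReal.ofReal_rpow_of_nonneg (by positivity) (by norm_num)]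

lemma tendsto_div_rpow_mul_rpow_atTop {c q a : ℝ} (hc : 0 ≤ c) (hq : 1 / 2 < q) (ha : 0 ≤ a) :
    Tendsto (fun R : ℝ => (c / R) ^ q * (R * a) ^ ((1 : ℝ) / 2)) atTop (𝓝 0) := by
  have hpow : Tendsto (fun R : ℝ => c ^ q * a ^ ((1 : ℝ) / 2) * R ^ ((1 : ℝ) / 2 - q))
      atTop (𝓝 0) := by
    simpa [neg_sub] using (tendsto_rpow_neg_atTop (by linarith : (0 : ℝ) < q - 1 / 2)).const_mul
      (c ^ q * a ^ ((1 : ℝ) / 2))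
  refine hpow.congr' ?_
  filter_upwards [eventually_gt_atTop 0] with R hR
  rw [Real.div_rpow hc hR.le, Real.mul_rpow hR.le ha, Real.rpow_sub hR]
  ring

/-- Key step of Corollary 1.2 in dimension one: for `1 < p < 3` and any nonzero
`u₀ ∈ L²(ℝ)`, there is `R₀ > 0` such that
`‖⟨·/R₀⟩⁻¹ u₀‖_{L²} ≥ (c/R₀)^{1/(p-1)} ‖⟨·/R₀⟩⁻¹‖_{L²}`. -/
theorem stmt_12 (p c : ℝ) (hp : 1 < p) (hp3 : p < 3) (hc : 0 < c)
    (u₀ : ℝ → ℂ) (hu₀ : MemLp u₀ 2 volume) (hne : eLpNorm u₀ 2 volume ≠ 0) :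
    ∃ R₀ : ℝ, 0 < R₀ ∧
      eLpNorm (fun x : ℝ =>
          (((1 + (x / R₀) ^ 2) ^ ((1 : ℝ) / 2) : ℝ)⁻¹ : ℂ) * u₀ x) 2 volume
      ≥ ENNReal.ofReal ((c / R₀) ^ (1 / (p - 1)))
        * eLpNorm (fun x : ℝ =>
            (((1 + (x / R₀) ^ 2) ^ ((1 : ℝ) / 2) : ℝ)⁻¹ : ℝ)) 2 volume := by
  have hq : 1 / 2 < 1 / (p - 1) := by
    rw [lt_div_iff₀ (by linarith)]
    linarith
  have hL : 0 < eLpNorm (fun x : ℝ =>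
      ((((1 + (x / 1) ^ 2) ^ ((1 : ℝ) / 2))⁻¹ : ℝ) : ℂ) * u₀ x) 2 volume :=
    pos_iff_ne_zero.2 <| eLpNorm_ofReal_mul_ne_zero two_ne_zero (by fun_prop)
      (fun x => by positivity) hu₀.1 hne
  have hsmall := ENNReal.tendsto_ofReal (tendsto_div_rpow_mul_rpow_atTop hc.le hq pi_pos.le)
  rw [ENNReal.ofReal_zero] at hsmall
  obtain ⟨R, hRL, hR1⟩ := ((hsmall.eventually_lt_const hL).and (eventually_ge_atTop 1)).exists
  have hR : 0 < R := one_pos.trans_le hR1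
  refine ⟨R, hR, ?_⟩
  simp only [← Complex.ofReal_inv]
  rw [eLpNorm_inv_sqrt_one_add_div_sq hR, ← ENNReal.ofReal_mul (by positivity)]
  exact hRL.le.trans
    (eLpNorm_ofReal_mul_mono (fun x => by positivity) (inv_sqrt_one_add_div_sq_le one_pos hR1) u₀)
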